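/- Let φ be a positive long root of an irreducible root system with Weyl group W. Then there exists a unique w ∈ W with w·φ = θ (the highest root) of length ℓ(w) = L(φ) = 2(θ−φ|ρ)/(θ|θ), and moreover w'·φ ≠ θ for every w' ∈ W with ℓ(w') < L(φ). -/

import Mathlib

open scoped RealInnerProductSpace BigOperators

noncomputable section

variable (V : Type) [NormedAddCommGroup V] [InnerProductSpace ℝ V] [FiniteDimensional ℝ V]

/-- A finite, reduced, crystallographic root system in a Euclidean space `V`,
with a chosen set of positive roots and the corresponding simple roots. -/
structure RootSystemData where
  /-- the rank -/
  l : ℕ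
  /-- the simple roots -/
  simple : Fin l → V
  /-- the set of roots -/
  roots : Finset V
  /-- the set of positive roots -/
  pos : Finset V
  pos_subset : pos ⊆ roots
  simple_mem_pos : ∀ i, simple i ∈ pos
  simple_indep : LinearIndependent ℝ simple
  span_roots : Submodule.span ℝ (roots : Set V) = ⊤
  root_ne_zero : ∀ α ∈ roots, α ≠ 0
  neg_mem : ∀ α ∈ roots, -α ∈ roots
  pos_iff : ∀ α ∈ roots, (α ∈ pos ↔ -α ∉ pos)
  pos_combo : ∀ α ∈ pos, ∃ c : Fin l → ℕ, α = ∑ i, (c i : ℝ) • simple i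
  crystal : ∀ α ∈ roots, ∀ β ∈ roots, ∃ n : ℤ, 2 * ⟪β, α⟫ / ⟪α, α⟫ = (n : ℝ)
  reflect_mem : ∀ α ∈ roots, ∀ β ∈ roots, β - (2 * ⟪β, α⟫ / ⟪α, α⟫) • α ∈ roots
  sub_mem : ∀ α ∈ roots, ∀ β ∈ roots, 0 < ⟪α, β⟫ → α ≠ β → α - β ∈ roots
  reduced : ∀ α ∈ roots, ∀ c : ℝ, c • α ∈ roots → c = 1 ∨ c = -1

namespace RootSystemData

open Classical

variable {V}

/-- The pairing `⟨λ, α∨⟩ = 2(λ|α)/(α|α)` of a vector with the coroot of `α`. -/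
def pair (lam α : V) : ℝ := 2 * ⟪lam, α⟫ / ⟪α, α⟫

/-- The orthogonal reflection in the hyperplane orthogonal to `α`. -/
def sRefl (α : V) : V ≃ₗᵢ[ℝ] V := Submodule.reflection ((ℝ ∙ α)ᗮ)

variable (R : RootSystemData V)

/-- Half the sum of the positive roots. -/
def ρ : V := (2 : ℝ)⁻¹ • ∑ φ ∈ R.pos, φ

/-- The (finite) Weyl group, generated by the simple reflections. -/
def W : Subgroup (V ≃ₗᵢ[ℝ] V) :=
  Subgroup.closure (Set.range fun i => sRefl (R.simple i))

/-- The length of a Weyl group element: the minimal length of a word in the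
simple reflections expressing it. -/
def len (w : V ≃ₗᵢ[ℝ] V) : ℕ :=
  sInf {k : ℕ | ∃ f : Fin k → Fin R.l,
    w = (List.ofFn fun j => sRefl (R.simple (f j))).prod}

/-- The inversion set `Φ_w = Φ₊ ∩ wΦ₋`. -/
def inversions (w : V ≃ₗᵢ[ℝ] V) : Finset V :=
  R.pos.filter fun x => -(w.symm x) ∈ R.pos

end RootSystemData

/-- An irreducible root system, together with its highest root `θ`. -/
structure IrredRootSystemData extends RootSystemData V where
  /-- the highest root -/
  θ : V
  θ_mem_pos : θ ∈ pos
  θ_highest : ∀ φ ∈ pos, ∃ c : Fin l → ℕ, θ - φ = ∑ i, (c i : ℝ) • simple i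
  θ_long : ∀ φ ∈ roots, ‖φ‖ ≤ ‖θ‖
  θ_dominant : ∀ i, 0 ≤ ⟪θ, simple i⟫
  irreducible : ∀ s : Finset V, s ⊆ roots →
      (∀ α ∈ s, ∀ β ∈ roots, β ∉ s → ⟪α, β⟫ = 0) → s = ∅ ∨ s = roots

namespace IrredRootSystemData

variable {V} (R : IrredRootSystemData V)

/-- The affine functional `L(φ) = 2(θ−φ|ρ)/(θ|θ)`. -/
def L (φ : V) : ℝ := 2 * ⟪R.θ - φ, R.toRootSystemData.ρ⟫ / ⟪R.θ, R.θ⟫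

/-- A root is long if it has the same length as the highest root. -/
def IsLong (φ : V) : Prop := ‖φ‖ = ‖R.θ‖

/-- The dual Coxeter number `g = ⟨ρ, θ∨⟩ + 1`. -/
def dualCox : ℝ := RootSystemData.pair R.toRootSystemData.ρ R.θ + 1

/-- The affine reflection `s₀(λ) = λ − (⟨λ,θ∨⟩ − g)θ` (scaled so that `s₀ρ = ρ + θ`). -/
def s0 (lam : V) : V := lam - (RootSystemData.pair lam R.θ - R.dualCox) • R.θ

end IrredRootSystemData

/-!
For `w ∈ W` with `wφ = θ`, pair `θ` with `ρ`: since `w⁻¹ρ = ρ - ∑_{γ ∈ N(w)} γ`, where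
`N(w) = Φ_{w⁻¹}` is the set of positive roots made negative by `w`, one gets
`L(φ) = ∑_{γ ∈ N(w)} -⟨γ, φ∨⟩`. As `φ` is long, every term is at most `1`, so
`L(φ) ≤ |N(w)| ≤ ℓ(w)`, and equality forces `N(w) = {γ > 0 | (γ|φ) < 0}`; since `N(w)` determines
`w`, the element is unique. An element of length at most `L(φ)` exists because, as long as
`φ ≠ θ`, some simple root `α` has `(φ|α) < 0`, and then `s_α φ` is again a positive long root,
with `L(s_α φ) = L(φ) - 1`.
-/

namespace RootSystemData

variable {E : Type} [NormedAddCommGroup E] [InnerProductSpace ℝ E]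

lemma sRefl_apply (α x : E) : sRefl α x = x - pair x α • α := by
  rw [sRefl, Submodule.reflection_orthogonal_apply, Submodule.reflection_singleton_apply, pair,
    real_inner_self_eq_norm_sq, real_inner_comm]
  simp only [RCLike.ofReal_real_eq_id, id_eq, neg_sub]
  module

@[simp]
lemma sRefl_self (α : E) : sRefl α α = -α :=
  Submodule.reflection_orthogonalComplement_singleton_eq_neg α

@[simp]
lemma sRefl_sRefl (α x : E) : sRefl α (sRefl α x) = x :=
  Submodule.reflection_reflection _ x

lemma sRefl_inv (α : E) : (sRefl α)⁻¹ = sRefl α :=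
  Submodule.reflection_symm

lemma sRefl_mul_self (α : E) : sRefl α * sRefl α = 1 :=
  Submodule.reflection_mul_reflection _

lemma sRefl_map (g : E ≃ₗᵢ[ℝ] E) (α : E) : sRefl (g α) = g * sRefl α * g⁻¹ := by
  ext x
  have hx : ⟪x, g α⟫ = ⟪g.symm x, α⟫ := by
    simpa using g.inner_map_map (g.symm x) α
  simp [sRefl_apply, pair, hx]

variable (R : RootSystemData E)

lemma simple_ne_zero (i : Fin R.l) : R.simple i ≠ 0 :=
  R.root_ne_zero _ (R.pos_subset (R.simple_mem_pos i))

lemma inner_simple_self_pos (i : Fin R.l) : 0 < ⟪R.simple i, R.simple i⟫ :=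
  real_inner_self_pos.2 (R.simple_ne_zero i)

lemma neg_notMem_pos {γ : E} (h : γ ∈ R.pos) : -γ ∉ R.pos :=
  (R.pos_iff γ (R.pos_subset h)).1 h

lemma neg_mem_pos_of_notMem {γ : E} (hγ : γ ∈ R.roots) (h : γ ∉ R.pos) : -γ ∈ R.pos :=
  (R.pos_iff (-γ) (R.neg_mem γ hγ)).2 (by rwa [neg_neg])

lemma sRefl_mem_roots {α β : E} (hα : α ∈ R.roots) (hβ : β ∈ R.roots) :
    sRefl α β ∈ R.roots := by
  rw [sRefl_apply]
  exact R.reflect_mem α hα β hβ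

lemma exists_coeff_ne_zero_of_ne_simple {β : E} (hβ : β ∈ R.pos) {i : Fin R.l}
    (hne : β ≠ R.simple i) :
    ∃ c : Fin R.l → ℕ, β = ∑ k, (c k : ℝ) • R.simple k ∧ ∃ j ≠ i, c j ≠ 0 := by
  obtain ⟨c, hc⟩ := R.pos_combo β hβ
  refine ⟨c, hc, ?_⟩
  by_contra! h
  have hβi : β = (c i : ℝ) • R.simple i := by
    rw [hc, Finset.sum_eq_single i (fun j _ hj => by simp [h j hj]) (by simp)]
  rcases R.reduced _ (R.pos_subset (R.simple_mem_pos i)) (c i) (hβi ▸ R.pos_subset hβ)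
    with h1 | h1
  · exact hne (by rw [hβi, h1, one_smul])
  · linarith [(c i).cast_nonneg (α := ℝ)]

lemma sRefl_simple_mem_pos {β : E} (hβ : β ∈ R.pos) {i : Fin R.l} (hne : β ≠ R.simple i) :
    sRefl (R.simple i) β ∈ R.pos := by
  obtain ⟨c, hc, j, hji, hcj⟩ := R.exists_coeff_ne_zero_of_ne_simple hβ hne
  by_contra hneg
  obtain ⟨d, hd⟩ := R.pos_combo _ (R.neg_mem_pos_of_notMem
    (R.sRefl_mem_roots (R.pos_subset (R.simple_mem_pos i)) (R.pos_subset hβ)) hneg)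
  -- the `j`-th coefficient of `s_i β` is `c j > 0`, but also `-d j ≤ 0` as `s_i β` is negative
  have hcoeff : ∑ k, ((c k : ℝ) - if k = i then pair β (R.simple i) else 0) • R.simple k
      = ∑ k, (-(d k : ℝ)) • R.simple k :=
    calc _ = β - pair β (R.simple i) • R.simple i := by
          simp [hc, sub_smul, Finset.sum_sub_distrib, ite_smul]
      _ = -(-sRefl (R.simple i) β) := by rw [neg_neg, sRefl_apply]
      _ = _ := by simp [hd]
  have hj := Fintype.linearIndependent_iffₛ.1 R.simple_indep _ _ hcoeff j
  simp only [hji, if_false, sub_zero] at hj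
  have : (c j : ℝ) ≤ 0 := by linarith [(d j).cast_nonneg (α := ℝ)]
  exact hcj (by exact_mod_cast this.antisymm (c j).cast_nonneg)

lemma sRefl_simple_mem_pos_erase [DecidableEq E] {β : E} {i : Fin R.l}
    (hβ : β ∈ R.pos.erase (R.simple i)) : sRefl (R.simple i) β ∈ R.pos.erase (R.simple i) := by
  rw [Finset.mem_erase] at hβ ⊢
  refine ⟨fun h => R.neg_notMem_pos (R.simple_mem_pos i) ?_, R.sRefl_simple_mem_pos hβ.2 hβ.1⟩
  have hβi : β = -R.simple i := by simpa using congrArg (sRefl (R.simple i)) h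
  exact hβi ▸ hβ.2

lemma sRefl_simple_rho (i : Fin R.l) : sRefl (R.simple i) R.ρ = R.ρ - R.simple i := by
  classical
  have hmem := R.simple_mem_pos i
  have herase : ∑ γ ∈ R.pos.erase (R.simple i), sRefl (R.simple i) γ
      = ∑ γ ∈ R.pos.erase (R.simple i), γ :=
    Finset.sum_nbij' _ _ (fun _ => R.sRefl_simple_mem_pos_erase)
      (fun _ => R.sRefl_simple_mem_pos_erase) (fun _ _ => sRefl_sRefl _ _)
      (fun _ _ => sRefl_sRefl _ _) (fun _ _ => rfl)
  rw [ρ, map_smul, map_sum, ← Finset.add_sum_erase _ _ hmem, herase,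
    ← Finset.add_sum_erase _ (fun γ => γ) hmem, sRefl_self]
  module

lemma inner_rho_simple (i : Fin R.l) :
    2 * ⟪R.ρ, R.simple i⟫ = ⟪R.simple i, R.simple i⟫ := by
  have h := R.sRefl_simple_rho i
  rw [sRefl_apply, sub_right_inj] at h
  have hpair : pair R.ρ (R.simple i) = 1 :=
    smul_left_injective ℝ (R.simple_ne_zero i) (h.trans (one_smul ℝ _).symm)
  rw [pair, div_eq_one_iff_eq (R.inner_simple_self_pos i).ne'] at hpair
  exact hpair

def wordProd (ω : List (Fin R.l)) : E ≃ₗᵢ[ℝ] E :=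
  (ω.map fun i => sRefl (R.simple i)).prod

@[simp]
lemma wordProd_nil : R.wordProd [] = 1 := rfl

lemma wordProd_cons (i : Fin R.l) (ω : List (Fin R.l)) :
    R.wordProd (i :: ω) = sRefl (R.simple i) * R.wordProd ω := by
  simp [wordProd]

lemma wordProd_append (ω ω' : List (Fin R.l)) :
    R.wordProd (ω ++ ω') = R.wordProd ω * R.wordProd ω' := by
  simp [wordProd]

lemma wordProd_concat (ω : List (Fin R.l)) (i : Fin R.l) :
    R.wordProd (ω ++ [i]) = R.wordProd ω * sRefl (R.simple i) := by
  simp [wordProd]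

lemma wordProd_reverse (ω : List (Fin R.l)) : R.wordProd ω.reverse = (R.wordProd ω)⁻¹ := by
  induction ω with
  | nil => simp
  | cons i ω ih =>
    rw [List.reverse_cons, wordProd_concat, ih, wordProd_cons, mul_inv_rev, sRefl_inv]

lemma sRefl_simple_mem_W (i : Fin R.l) : sRefl (R.simple i) ∈ R.W :=
  Subgroup.subset_closure ⟨i, rfl⟩

lemma wordProd_mem_W (ω : List (Fin R.l)) : R.wordProd ω ∈ R.W := by
  induction ω with
  | nil => exact one_mem _
  | cons i ω ih => exact R.wordProd_cons i ω ▸ mul_mem (R.sRefl_simple_mem_W i) ih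

lemma exists_eq_wordProd {w : E ≃ₗᵢ[ℝ] E} (hw : w ∈ R.W) : ∃ ω, w = R.wordProd ω := by
  induction hw using Subgroup.closure_induction with
  | mem _ hx => obtain ⟨i, rfl⟩ := hx; exact ⟨[i], by simp [wordProd]⟩
  | one => exact ⟨[], rfl⟩
  | mul _ _ _ _ hx hy =>
    obtain ⟨ω, rfl⟩ := hx
    obtain ⟨ω', rfl⟩ := hy
    exact ⟨ω ++ ω', (R.wordProd_append ω ω').symm⟩
  | inv _ _ hx =>
    obtain ⟨ω, rfl⟩ := hx
    exact ⟨ω.reverse, (R.wordProd_reverse ω).symm⟩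

lemma wordProd_apply_mem_roots (ω : List (Fin R.l)) {γ : E} (hγ : γ ∈ R.roots) :
    R.wordProd ω γ ∈ R.roots := by
  induction ω with
  | nil => simpa
  | cons i ω ih =>
    rw [wordProd_cons, LinearIsometryEquiv.coe_mul, Function.comp_apply]
    exact R.sRefl_mem_roots (R.pos_subset (R.simple_mem_pos i)) ih

lemma apply_mem_roots {w : E ≃ₗᵢ[ℝ] E} (hw : w ∈ R.W) {γ : E} (hγ : γ ∈ R.roots) :
    w γ ∈ R.roots := by
  obtain ⟨ω, rfl⟩ := R.exists_eq_wordProd hw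
  exact R.wordProd_apply_mem_roots ω hγ

lemma wordProd_ofFn {k : ℕ} (f : Fin k → Fin R.l) :
    R.wordProd (List.ofFn f) = (List.ofFn fun j => sRefl (R.simple (f j))).prod := by
  rw [wordProd, List.map_ofFn]
  rfl

lemma len_le_length {w : E ≃ₗᵢ[ℝ] E} {ω : List (Fin R.l)} (h : w = R.wordProd ω) :
    R.len w ≤ ω.length :=
  Nat.sInf_le ⟨ω.get, by rw [← wordProd_ofFn, List.ofFn_get, h]⟩

lemma exists_length_eq_len {w : E ≃ₗᵢ[ℝ] E} (hw : w ∈ R.W) :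
    ∃ ω, ω.length = R.len w ∧ w = R.wordProd ω := by
  obtain ⟨ω₀, hω₀⟩ := R.exists_eq_wordProd hw
  obtain ⟨f, hf⟩ := Nat.sInf_mem (s := {k | ∃ f : Fin k → Fin R.l,
    w = (List.ofFn fun j => sRefl (R.simple (f j))).prod})
    ⟨_, ω₀.get, by rw [← wordProd_ofFn, List.ofFn_get, hω₀]⟩
  exact ⟨List.ofFn f, List.length_ofFn, by rw [wordProd_ofFn]; exact hf⟩

lemma len_mul_sRefl_simple_le {w : E ≃ₗᵢ[ℝ] E} (hw : w ∈ R.W) (i : Fin R.l) :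
    R.len (w * sRefl (R.simple i)) ≤ R.len w + 1 := by
  obtain ⟨ω, hω, rfl⟩ := R.exists_length_eq_len hw
  simpa [hω] using R.len_le_length (R.wordProd_concat ω i).symm

lemma inversions_subset (w : E ≃ₗᵢ[ℝ] E) : R.inversions w ⊆ R.pos := by
  classical
  exact Finset.filter_subset _ _

lemma mem_inversions_symm {w : E ≃ₗᵢ[ℝ] E} (hw : w ∈ R.W) {γ : E} :
    γ ∈ R.inversions w.symm ↔ γ ∈ R.pos ∧ w γ ∉ R.pos := by
  classical
  rw [inversions, Finset.mem_filter, LinearIsometryEquiv.symm_symm]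
  refine and_congr_right fun hγ => ?_
  have := R.pos_iff _ (R.apply_mem_roots hw (R.pos_subset hγ))
  tauto

lemma inversions_symm_sRefl_simple_mul_subset [DecidableEq E] {u : E ≃ₗᵢ[ℝ] E} (hu : u ∈ R.W)
    (i : Fin R.l) :
    R.inversions (sRefl (R.simple i) * u).symm ⊆
      insert (u.symm (R.simple i)) (R.inversions u.symm) := by
  intro γ hγ
  rw [R.mem_inversions_symm (mul_mem (R.sRefl_simple_mem_W i) hu),
    LinearIsometryEquiv.coe_mul, Function.comp_apply] at hγ
  rw [Finset.mem_insert, R.mem_inversions_symm hu]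
  by_cases hui : u γ = R.simple i
  · exact Or.inl (by rw [← hui, LinearIsometryEquiv.symm_apply_apply])
  · exact Or.inr ⟨hγ.1, fun h => hγ.2 (R.sRefl_simple_mem_pos h hui)⟩

lemma card_inversions_symm_le_len {w : E ≃ₗᵢ[ℝ] E} (hw : w ∈ R.W) :
    (R.inversions w.symm).card ≤ R.len w := by
  classical
  obtain ⟨ω, hlen, rfl⟩ := R.exists_length_eq_len hw
  rw [← hlen]
  clear hlen hw
  induction ω with
  | nil =>
    refine (Finset.card_eq_zero.2 (Finset.eq_empty_of_forall_notMem fun γ hγ => ?_)).le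
    rw [R.mem_inversions_symm (R.wordProd_mem_W [])] at hγ
    exact hγ.2 (by simpa using hγ.1)
  | cons i ω ih =>
    rw [wordProd_cons]
    calc _ ≤ (insert _ _ : Finset E).card :=
          Finset.card_le_card (R.inversions_symm_sRefl_simple_mul_subset (R.wordProd_mem_W ω) i)
      _ ≤ _ := Finset.card_insert_le _ _
      _ ≤ _ := by simp [ih]

lemma sum_pos_symm_apply [DecidableEq E] {w : E ≃ₗᵢ[ℝ] E} (hw : w ∈ R.W) :
    ∑ β ∈ R.pos, w.symm β = ∑ γ ∈ R.pos, if w γ ∈ R.pos then γ else -γ := by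
  have hw' : w.symm ∈ R.W := inv_mem hw
  have habs : ∀ {x}, x ∈ R.roots → (if x ∈ R.pos then x else -x) ∈ R.pos := fun hx => by
    split_ifs with h
    exacts [h, R.neg_mem_pos_of_notMem hx h]
  refine Finset.sum_nbij' (fun β => if w.symm β ∈ R.pos then w.symm β else -w.symm β)
    (fun γ => if w γ ∈ R.pos then w γ else -w γ)
    (fun β hβ => habs (R.apply_mem_roots hw' (R.pos_subset hβ)))
    (fun γ hγ => habs (R.apply_mem_roots hw (R.pos_subset hγ))) (fun β hβ => ?_) (fun γ hγ => ?_)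
    (fun β hβ => ?_)
  · by_cases h : w.symm β ∈ R.pos <;> simp [h, hβ, R.neg_notMem_pos hβ]
  · by_cases h : w γ ∈ R.pos <;> simp [h, hγ, R.neg_notMem_pos hγ]
  · by_cases h : w.symm β ∈ R.pos <;> simp [h, hβ, R.neg_notMem_pos hβ]

lemma symm_rho {w : E ≃ₗᵢ[ℝ] E} (hw : w ∈ R.W) :
    w.symm R.ρ = R.ρ - ∑ γ ∈ R.inversions w.symm, γ := by
  classical
  have hsign : ∀ γ ∈ R.pos, (if w γ ∈ R.pos then γ else -γ)
      = γ - (2 : ℝ) • if γ ∈ R.inversions w.symm then γ else 0 := by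
    intro γ hγ
    by_cases h : w γ ∈ R.pos
    · simp [h, hγ, R.mem_inversions_symm hw]
    · simp only [h, if_false, R.mem_inversions_symm hw, hγ, not_false_eq_true, and_self, if_true]
      module
  rw [ρ, map_smul, map_sum, R.sum_pos_symm_apply hw, Finset.sum_congr rfl hsign,
    Finset.sum_sub_distrib, ← Finset.smul_sum, Finset.sum_ite_mem,
    Finset.inter_eq_right.2 (R.inversions_subset _)]
  module

/-- The exchange condition (Humphreys, *Reflection groups and Coxeter groups*, 1.7). -/
lemma exists_wordProd_mul_sRefl_eq (ω : List (Fin R.l)) {i : Fin R.l}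
    (h : R.wordProd ω (R.simple i) ∉ R.pos) :
    ∃ ω', ω'.length + 1 = ω.length ∧ R.wordProd ω * sRefl (R.simple i) = R.wordProd ω' := by
  induction ω with
  | nil => exact absurd (R.simple_mem_pos i) (by simpa using h)
  | cons j ω ih =>
    rw [wordProd_cons, LinearIsometryEquiv.coe_mul, Function.comp_apply] at h
    by_cases hu : R.wordProd ω (R.simple i) ∈ R.pos
    · -- `s_j` only makes `u α_i > 0` negative if `u α_i = α_j`, and then `s_j = u s_i u⁻¹`
      have hj : R.wordProd ω (R.simple i) = R.simple j :=
        by_contra fun hne => h (R.sRefl_simple_mem_pos hu hne)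
      refine ⟨ω, rfl, ?_⟩
      rw [wordProd_cons, ← hj, sRefl_map]
      simp only [mul_assoc, inv_mul_cancel_left, sRefl_mul_self, mul_one]
    · obtain ⟨ω', hlen, heq⟩ := ih hu
      exact ⟨j :: ω', by simp [← hlen], by rw [wordProd_cons, mul_assoc, heq, wordProd_cons]⟩

lemma eq_one_of_forall_apply_mem_pos {w : E ≃ₗᵢ[ℝ] E} (hw : w ∈ R.W)
    (hpos : ∀ γ ∈ R.pos, w γ ∈ R.pos) : w = 1 := by
  obtain ⟨_ | ⟨j, ω⟩, hlen, rfl⟩ := R.exists_length_eq_len hw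
  · rfl
  · -- `w = s_j u` sends `u⁻¹ α_j` to `-α_j`, so deleting a letter from `u⁻¹ s_j = w⁻¹`
    -- gives a word for `w` shorter than `ℓ(w)`
    have hneg : R.wordProd ω.reverse (R.simple j) ∉ R.pos := fun h => by
      have := hpos _ h
      simp only [wordProd_reverse, wordProd_cons, LinearIsometryEquiv.coe_mul,
        LinearIsometryEquiv.coe_inv, Function.comp_apply, LinearIsometryEquiv.apply_symm_apply,
        sRefl_self] at this
      exact R.neg_notMem_pos (R.simple_mem_pos j) this
    obtain ⟨ω', hlen', heq⟩ := R.exists_wordProd_mul_sRefl_eq ω.reverse hneg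
    have hw' : R.wordProd (j :: ω) = R.wordProd ω'.reverse := by
      rw [wordProd_reverse, ← heq, mul_inv_rev, sRefl_inv, wordProd_reverse, inv_inv,
        wordProd_cons]
    have := R.len_le_length hw'
    simp only [List.length_reverse, List.length_cons] at hlen hlen' this
    omega

lemma eq_of_inversions_symm_eq {w w' : E ≃ₗᵢ[ℝ] E} (hw : w ∈ R.W) (hw' : w' ∈ R.W)
    (h : R.inversions w.symm = R.inversions w'.symm) : w = w' := by
  refine (mul_inv_eq_one.1 (R.eq_one_of_forall_apply_mem_pos (mul_mem hw' (inv_mem hw))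
    fun β hβ => ?_)).symm
  show w' (w.symm β) ∈ R.pos
  have hγ : w.symm β ∈ R.roots := R.apply_mem_roots (inv_mem hw) (R.pos_subset hβ)
  by_cases hγpos : w.symm β ∈ R.pos
  · have hinv : w.symm β ∉ R.inversions w'.symm := by
      rw [← h, R.mem_inversions_symm hw, LinearIsometryEquiv.apply_symm_apply]
      tauto
    rw [R.mem_inversions_symm hw'] at hinv
    tauto
  · have hinv : -w.symm β ∈ R.inversions w'.symm := by
      rw [← h, R.mem_inversions_symm hw, map_neg, LinearIsometryEquiv.apply_symm_apply]
      exact ⟨R.neg_mem_pos_of_notMem hγ hγpos, R.neg_notMem_pos hβ⟩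
    rw [R.mem_inversions_symm hw', map_neg] at hinv
    simpa using R.neg_mem_pos_of_notMem (R.neg_mem _ (R.apply_mem_roots hw' hγ)) hinv.2

end RootSystemData

namespace IrredRootSystemData

open RootSystemData

variable {E : Type} [NormedAddCommGroup E] [InnerProductSpace ℝ E] (R : IrredRootSystemData E)

lemma inner_θ_self_pos : 0 < ⟪R.θ, R.θ⟫ :=
  real_inner_self_pos.2 (R.root_ne_zero _ (R.pos_subset R.θ_mem_pos))

lemma inner_self_eq_of_isLong {φ : E} (h : R.IsLong φ) : ⟪φ, φ⟫ = ⟪R.θ, R.θ⟫ := by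
  rw [real_inner_self_eq_norm_sq, real_inner_self_eq_norm_sq, h]

lemma inner_self_le {γ : E} (hγ : γ ∈ R.roots) : ⟪γ, γ⟫ ≤ ⟪R.θ, R.θ⟫ := by
  rw [real_inner_self_eq_norm_sq, real_inner_self_eq_norm_sq]
  exact pow_le_pow_left₀ (norm_nonneg _) (R.θ_long γ hγ) 2

lemma inner_θ_nonneg {β : E} (hβ : β ∈ R.pos) : 0 ≤ ⟪R.θ, β⟫ := by
  obtain ⟨c, hc⟩ := R.pos_combo β hβ
  rw [hc, inner_sum]
  exact Finset.sum_nonneg fun i _ => by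
    rw [real_inner_smul_right]
    exact mul_nonneg (Nat.cast_nonneg _) (R.θ_dominant i)

lemma neg_one_le_pair {γ φ : E} (hγ : γ ∈ R.pos) (hφ : φ ∈ R.pos) (hlong : R.IsLong φ) :
    -1 ≤ pair γ φ := by
  -- an integer `⟨γ, φ∨⟩ ≤ -2` would give `|γ + φ|² ≤ |γ|² - |φ|² ≤ 0`
  obtain ⟨n, hn⟩ := R.crystal φ (R.pos_subset hφ) γ (R.pos_subset hγ)
  by_contra! hlt
  have hφφ : 0 < ⟪φ, φ⟫ := R.inner_self_eq_of_isLong hlong ▸ R.inner_θ_self_pos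
  rw [pair, hn] at hlt
  have hn2 : (n : ℝ) ≤ -2 := by
    have : n < -1 := by exact_mod_cast hlt
    exact_mod_cast (by omega : n ≤ -2)
  rw [← hn, div_le_iff₀ hφφ] at hn2
  have hγγ : ⟪γ, γ⟫ ≤ ⟪φ, φ⟫ :=
    R.inner_self_eq_of_isLong hlong ▸ R.inner_self_le (R.pos_subset hγ)
  have hsum : ⟪γ + φ, γ + φ⟫ ≤ 0 := by
    rw [real_inner_add_add_self]
    linarith
  rw [real_inner_self_nonpos, add_eq_zero_iff_eq_neg] at hsum
  exact R.neg_notMem_pos hφ (hsum ▸ hγ)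

lemma L_eq_sum_inversions {w : E ≃ₗᵢ[ℝ] E} (hw : w ∈ R.W) {φ : E} (hwφ : w φ = R.θ)
    (hlong : R.IsLong φ) : R.L φ = ∑ γ ∈ R.inversions w.symm, -pair γ φ := by
  have hθρ : ⟪R.θ, R.ρ⟫ = ⟪φ, w.symm R.ρ⟫ := by
    rw [← hwφ, ← w.inner_map_map φ, LinearIsometryEquiv.apply_symm_apply]
  rw [L, inner_sub_left, hθρ, R.symm_rho hw, inner_sub_right, inner_sum,
    ← R.inner_self_eq_of_isLong hlong]
  simp only [pair, real_inner_comm φ, Finset.sum_neg_distrib, ← Finset.sum_div, ← Finset.mul_sum]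
  ring

lemma L_le_card_inversions {w : E ≃ₗᵢ[ℝ] E} (hw : w ∈ R.W) {φ : E} (hwφ : w φ = R.θ)
    (hφ : φ ∈ R.pos) (hlong : R.IsLong φ) : R.L φ ≤ (R.inversions w.symm).card := by
  rw [R.L_eq_sum_inversions hw hwφ hlong]
  simpa using Finset.sum_le_card_nsmul _ (fun γ => -pair γ φ) 1 fun γ hγ => by
    linarith [R.neg_one_le_pair (R.inversions_subset _ hγ) hφ hlong]

lemma L_le_len {w : E ≃ₗᵢ[ℝ] E} (hw : w ∈ R.W) {φ : E} (hwφ : w φ = R.θ)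
    (hφ : φ ∈ R.pos) (hlong : R.IsLong φ) : R.L φ ≤ R.len w :=
  (R.L_le_card_inversions hw hwφ hφ hlong).trans
    (by exact_mod_cast R.card_inversions_symm_le_len hw)

lemma inversions_symm_eq_of_len_eq {w : E ≃ₗᵢ[ℝ] E} (hw : w ∈ R.W) {φ : E} (hwφ : w φ = R.θ)
    (hφ : φ ∈ R.pos) (hlong : R.IsLong φ) (hlen : (R.len w : ℝ) = R.L φ) :
    R.inversions w.symm = R.pos.filter (⟪·, φ⟫ < 0) := by
  ext γ
  rw [Finset.mem_filter]
  constructor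
  · intro hγ
    refine ⟨R.inversions_subset _ hγ, ?_⟩
    -- `L(φ) ≤ |N(w)| ≤ ℓ(w) = L(φ)` forces every term `-⟨δ, φ∨⟩ ≤ 1` of `L(φ)` to be `1`
    have hterm : ∀ δ ∈ R.inversions w.symm, -pair δ φ ≤ 1 := fun δ hδ => by
      linarith [R.neg_one_le_pair (R.inversions_subset _ hδ) hφ hlong]
    have hsum : ∑ δ ∈ R.inversions w.symm, -pair δ φ = ∑ δ ∈ R.inversions w.symm, (1 : ℝ) := by
      refine le_antisymm (Finset.sum_le_sum hterm) ?_
      rw [← R.L_eq_sum_inversions hw hwφ hlong, Finset.sum_const, nsmul_one, ← hlen]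
      exact_mod_cast R.card_inversions_symm_le_len hw
    have hpair : pair γ φ < 0 := by
      linarith [(Finset.sum_eq_sum_iff_of_le hterm).1 hsum γ hγ]
    have hφφ : 0 < ⟪φ, φ⟫ := R.inner_self_eq_of_isLong hlong ▸ R.inner_θ_self_pos
    rw [pair, div_lt_iff₀ hφφ] at hpair
    linarith
  · rintro ⟨hγ, hneg⟩
    rw [R.mem_inversions_symm hw]
    refine ⟨hγ, fun hpos => ?_⟩
    have := R.inner_θ_nonneg hpos
    rw [← hwφ, w.inner_map_map, real_inner_comm] at this
    linarith

lemma L_nonneg {φ : E} (hφ : φ ∈ R.pos) : 0 ≤ R.L φ := by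
  obtain ⟨c, hc⟩ := R.θ_highest φ hφ
  refine div_nonneg (mul_nonneg zero_le_two ?_) R.inner_θ_self_pos.le
  rw [hc, sum_inner]
  exact Finset.sum_nonneg fun i _ => by
    rw [real_inner_smul_left, real_inner_comm]
    exact mul_nonneg (Nat.cast_nonneg _)
      (by linarith [R.inner_rho_simple i, R.inner_simple_self_pos i])

lemma L_sRefl_simple (x : E) (i : Fin R.l) :
    R.L (sRefl (R.simple i) x) = R.L x + 2 * ⟪x, R.simple i⟫ / ⟪R.θ, R.θ⟫ := by
  have hρ : ⟪R.simple i, R.ρ⟫ = ⟪R.simple i, R.simple i⟫ / 2 := by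
    rw [real_inner_comm]
    linarith [R.inner_rho_simple i]
  have hp : pair x (R.simple i) * ⟪R.simple i, R.ρ⟫ = ⟪x, R.simple i⟫ := by
    have hα := (R.inner_simple_self_pos i).ne'
    rw [pair, hρ]
    field_simp
  rw [L, L, sRefl_apply, sub_sub_eq_add_sub, add_sub_right_comm, inner_add_left,
    real_inner_smul_left, hp]
  ring

lemma exists_inner_simple_neg {φ : E} (hφ : φ ∈ R.pos) (hlong : R.IsLong φ) (hne : φ ≠ R.θ) :
    ∃ i, ⟪φ, R.simple i⟫ < 0 := by
  -- otherwise `(φ|θ - φ) ≥ 0`, so `|θ - φ|² = 2|θ|² - 2(φ|θ) ≤ 0`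
  by_contra! h
  obtain ⟨c, hc⟩ := R.θ_highest φ hφ
  have h1 : 0 ≤ ⟪φ, R.θ - φ⟫ := by
    rw [hc, inner_sum]
    exact Finset.sum_nonneg fun i _ => by
      rw [real_inner_smul_right]
      exact mul_nonneg (Nat.cast_nonneg _) (h i)
  have h2 : ⟪R.θ - φ, R.θ - φ⟫ ≤ 0 := by
    rw [real_inner_sub_sub_self, real_inner_comm φ R.θ, ← R.inner_self_eq_of_isLong hlong]
    rw [inner_sub_right] at h1
    linarith
  exact hne (sub_eq_zero.1 (real_inner_self_nonpos.1 h2)).symm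

lemma pair_simple_eq_neg_one {φ : E} (hφ : φ ∈ R.pos) (hlong : R.IsLong φ) {i : Fin R.l}
    (hi : ⟪φ, R.simple i⟫ < 0) : pair (R.simple i) φ = -1 := by
  obtain ⟨n, hn⟩ := R.crystal φ (R.pos_subset hφ) _ (R.pos_subset (R.simple_mem_pos i))
  have hφφ : 0 < ⟪φ, φ⟫ := R.inner_self_eq_of_isLong hlong ▸ R.inner_θ_self_pos
  have hlt : pair (R.simple i) φ < 0 :=
    div_neg_of_neg_of_pos (by rw [real_inner_comm]; linarith) hφφ
  have hge := R.neg_one_le_pair (R.simple_mem_pos i) hφ hlong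
  rw [pair, hn] at hlt hge ⊢
  have : n = -1 := by
    have : -1 ≤ n := by exact_mod_cast hge
    have : n < 0 := by exact_mod_cast hlt
    omega
  simp [this]

lemma L_sRefl_simple_of_inner_neg {φ : E} (hφ : φ ∈ R.pos) (hlong : R.IsLong φ) {i : Fin R.l}
    (hi : ⟪φ, R.simple i⟫ < 0) : R.L (sRefl (R.simple i) φ) = R.L φ - 1 := by
  have h := R.pair_simple_eq_neg_one hφ hlong hi
  rw [pair, real_inner_comm, R.inner_self_eq_of_isLong hlong] at h
  rw [R.L_sRefl_simple, h]
  ring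

lemma exists_apply_eq_θ_len_le {φ : E} (hφ : φ ∈ R.pos) (hlong : R.IsLong φ) :
    ∃ w ∈ R.W, w φ = R.θ ∧ (R.len w : ℝ) ≤ R.L φ := by
  suffices h : ∀ n : ℕ, ∀ φ ∈ R.pos, R.IsLong φ → R.L φ < n →
      ∃ w ∈ R.W, w φ = R.θ ∧ (R.len w : ℝ) ≤ R.L φ from
    h _ φ hφ hlong (by exact_mod_cast Nat.lt_floor_add_one (R.L φ))
  intro n
  induction n with
  | zero => exact fun φ hφ _ hL => absurd hL (by simpa using R.L_nonneg hφ)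
  | succ n ih =>
    intro φ hφ hlong hL
    by_cases hθ : φ = R.θ
    · refine ⟨1, one_mem _, by rw [hθ]; rfl, ?_⟩
      have : R.len 1 = 0 := Nat.le_zero.1 (R.len_le_length (R.wordProd_nil).symm)
      simp [this, hθ, L]
    obtain ⟨i, hi⟩ := R.exists_inner_simple_neg hφ hlong hθ
    have hne : φ ≠ R.simple i := fun h => (R.inner_simple_self_pos i).not_gt (h ▸ hi)
    have hLψ := R.L_sRefl_simple_of_inner_neg hφ hlong hi
    obtain ⟨w, hw, hwψ, hlen⟩ := ih _ (R.sRefl_simple_mem_pos hφ hne)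
      (by rwa [IsLong, LinearIsometryEquiv.norm_map]) (by push_cast at hL; linarith)
    refine ⟨w * sRefl (R.simple i), mul_mem hw (R.sRefl_simple_mem_W i), hwψ, ?_⟩
    calc (R.len (w * sRefl (R.simple i)) : ℝ) ≤ R.len w + 1 := by
          exact_mod_cast R.len_mul_sRefl_simple_le hw i
      _ ≤ R.L φ := by linarith

end IrredRootSystemData

/-- For each positive long root `φ` there is a unique Weyl group element `w`
of length `ℓ(w) = L(φ)` with `wφ = θ`; moreover no element of length less
than `L(φ)` maps `φ` to `θ`. -/
theorem exists_unique_min_weyl_elt_to_highest_root (R : IrredRootSystemData V)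
    (φ : V) (hφ : φ ∈ R.pos) (hlong : R.IsLong φ) :
    (∃! w : V ≃ₗᵢ[ℝ] V, w ∈ R.W ∧ (R.len w : ℝ) = R.L φ ∧ w φ = R.θ) ∧
    ∀ w' ∈ R.W, ((R.len w' : ℝ) < R.L φ) → w' φ ≠ R.θ := by
  obtain ⟨w, hw, hwφ, hwlen⟩ := R.exists_apply_eq_θ_len_le hφ hlong
  have hlen : (R.len w : ℝ) = R.L φ := le_antisymm hwlen (R.L_le_len hw hwφ hφ hlong)
  refine ⟨⟨w, ⟨hw, hlen, hwφ⟩, fun w' ⟨hw', hw'len, hw'φ⟩ => ?_⟩,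
    fun w' hw' hlt hw'φ => hlt.not_ge (R.L_le_len hw' hw'φ hφ hlong)⟩
  refine (R.eq_of_inversions_symm_eq hw hw' ?_).symm
  rw [R.inversions_symm_eq_of_len_eq hw hwφ hφ hlong hlen,
    R.inversions_symm_eq_of_len_eq hw' hw'φ hφ hlong hw'len]
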